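/- Define 𝒜i(u,z) as above. Then 𝒜i(u,z) = 2 e^{-πi/6} cos(uπ/2)·Ai(z e^{-2πi/3}) + i e^{-uπi/2}·Ai(z) for all real u and complex z. -/
import Mathlib

open Complex

noncomputable def airyf (z : ℂ) : ℂ :=
  ∑' n : ℕ, (∏ k ∈ Finset.range n, ((3 : ℂ) * k + 1)) * z ^ (3 * n) / (3 * n).factorial

noncomputable def airyg (z : ℂ) : ℂ :=
  ∑' n : ℕ, (∏ k ∈ Finset.range n, ((3 : ℂ) * k + 2)) * z ^ (3 * n + 1) / (3 * n + 1).factorial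

noncomputable def Ai (z : ℂ) : ℂ :=
  (3 : ℂ) ^ (-(2 : ℂ) / 3) / Complex.Gamma (2 / 3) * airyf z
    - (3 : ℂ) ^ (-(1 : ℂ) / 3) / Complex.Gamma (1 / 3) * airyg z

noncomputable def Bi (z : ℂ) : ℂ :=
  (3 : ℂ) ^ (-(1 : ℂ) / 6) / Complex.Gamma (2 / 3) * airyf z
    + (3 : ℂ) ^ ((1 : ℂ) / 6) / Complex.Gamma (1 / 3) * airyg z

noncomputable def scrAi (u : ℝ) (z : ℂ) : ℂ :=
  Complex.exp ((3 * u - 1) * Real.pi * I / 6) * Ai (z * Complex.exp (-(2 * Real.pi * I) / 3))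
    + Complex.exp (-((3 * u - 1) * Real.pi * I) / 6) * Ai (z * Complex.exp (2 * Real.pi * I / 3))

lemma airyf_mul_cube (z c : ℂ) (hc : c ^ 3 = 1) : airyf (z * c) = airyf z := by
  unfold airyf
  exact tsum_congr fun n => by rw [mul_pow, pow_mul c 3 n, hc, one_pow, mul_one]

lemma airyg_mul_cube (z c : ℂ) (hc : c ^ 3 = 1) : airyg (z * c) = c * airyg z := by
  unfold airyg
  rw [← tsum_mul_left]
  exact tsum_congr fun n => by rw [mul_pow, pow_succ c (3 * n), pow_mul c 3 n, hc, one_pow, one_mul]; ring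

lemma Ai_mul_cube (z c : ℂ) (hc : c ^ 3 = 1) :
    Ai (z * c) = (3 : ℂ) ^ (-(2 : ℂ) / 3) / Complex.Gamma (2 / 3) * airyf z
      - c * ((3 : ℂ) ^ (-(1 : ℂ) / 3) / Complex.Gamma (1 / 3) * airyg z) := by
  unfold Ai
  rw [airyf_mul_cube z c hc, airyg_mul_cube z c hc]; ring

theorem scrAi_alt_form (u : ℝ) (z : ℂ) :
    scrAi u z
      = 2 * Complex.exp (-(Real.pi * I) / 6) * (Real.cos (u * Real.pi / 2) : ℂ)
          * Ai (z * Complex.exp (-(2 * Real.pi * I) / 3))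
        + I * Complex.exp (-(u * Real.pi * I) / 2) * Ai z := by
  set a : ℂ := Complex.exp (Real.pi * I / 6) with ha_def
  set b : ℂ := Complex.exp (-(Real.pi * I) / 6) with hb_def
  set E : ℂ := Complex.exp (u * Real.pi * I / 2) with hE_def
  set E' : ℂ := Complex.exp (-(u * Real.pi * I) / 2) with hE'_def
  set s : ℂ := (Real.sqrt 3 : ℂ) with hs_def
  have hs : s ^ 2 = 3 := by
    rw [hs_def, ← Complex.ofReal_pow, Real.sq_sqrt (by norm_num : (3:ℝ) ≥ 0)]
    norm_num
  have ha : a = (s + I) / 2 := by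
    rw [ha_def, show (Real.pi : ℂ) * I / 6 = (↑(Real.pi / 6) : ℂ) * I by push_cast; ring,
      Complex.exp_mul_I, ← Complex.ofReal_cos, ← Complex.ofReal_sin,
      Real.cos_pi_div_six, Real.sin_pi_div_six]
    push_cast; ring
  have hb : b = (s - I) / 2 := by
    rw [hb_def, show -((Real.pi : ℂ) * I) / 6 = (↑(-(Real.pi / 6)) : ℂ) * I by push_cast; ring,
      Complex.exp_mul_I, ← Complex.ofReal_cos, ← Complex.ofReal_sin,
      Real.cos_neg, Real.sin_neg, Real.cos_pi_div_six, Real.sin_pi_div_six]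
    push_cast; ring
  have hω : Complex.exp (2 * (Real.pi : ℂ) * I / 3) = a ^ 4 := by
    rw [ha_def, ← Complex.exp_nat_mul]
    congr 1; ring
  have hωb : Complex.exp (-(2 * (Real.pi : ℂ) * I) / 3) = b ^ 4 := by
    rw [hb_def, ← Complex.exp_nat_mul]
    congr 1; ring
  have hc1 : (Complex.exp (-(2 * (Real.pi : ℂ) * I) / 3)) ^ 3 = 1 := by
    rw [← Complex.exp_nat_mul, show ((3:ℕ):ℂ) * (-(2 * (Real.pi : ℂ) * I) / 3)
      = -(2 * Real.pi * I) by push_cast; ring, Complex.exp_neg, Complex.exp_two_pi_mul_I]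
    norm_num
  have hc2 : (Complex.exp (2 * (Real.pi : ℂ) * I / 3)) ^ 3 = 1 := by
    rw [← Complex.exp_nat_mul, show ((3:ℕ):ℂ) * (2 * (Real.pi : ℂ) * I / 3)
      = 2 * Real.pi * I by push_cast; ring, Complex.exp_two_pi_mul_I]
  have hab : a - b = I := by rw [ha, hb]; ring
  have h5 : a ^ 5 - b ^ 5 = I := by
    rw [ha, hb]
    linear_combination (10 * I * (s ^ 2 + 3) / 32 + 20 * I ^ 3 / 32) * hs
      + (2 * I * (I ^ 2 + 1) / 32 + 56 * I / 32) * Complex.I_sq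
  have key : a * Ai (z * Complex.exp (2 * (Real.pi : ℂ) * I / 3))
      = b * Ai (z * Complex.exp (-(2 * (Real.pi : ℂ) * I) / 3)) + I * Ai z := by
    rw [Ai_mul_cube z _ hc1, Ai_mul_cube z _ hc2, hω, hωb]
    unfold Ai
    linear_combination ((3 : ℂ) ^ (-(2 : ℂ) / 3) / Complex.Gamma (2 / 3) * airyf z) * hab
      - ((3 : ℂ) ^ (-(1 : ℂ) / 3) / Complex.Gamma (1 / 3) * airyg z) * h5
  have e1 : Complex.exp ((3 * (u:ℂ) - 1) * Real.pi * I / 6) = E * b := by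
    rw [hE_def, hb_def, ← Complex.exp_add]; congr 1; ring
  have e2 : Complex.exp (-((3 * (u:ℂ) - 1) * Real.pi * I) / 6) = E' * a := by
    rw [hE'_def, ha_def, ← Complex.exp_add]; congr 1; ring
  have ecos : (Real.cos (u * Real.pi / 2) : ℂ) = (E + E') / 2 := by
    rw [Complex.ofReal_cos, Complex.cos, hE_def, hE'_def]
    congr 2
    · congr 1; push_cast; ring
    · congr 1; push_cast; ring
  unfold scrAi
  rw [e1, e2, ecos]
  linear_combination E' * key
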